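/- Let λ ∈ {1,−1}, L₁, T > 0, N ≥ 1 and w₀ ∈ ℍ_N. Let (τ_m)_{m≥0} be positive reals with partial sums t_m = τ₀ + ⋯ + τ_{m−1}, and let (w_m)_{m≥0} in ℍ_N be such that, for each m, w_{m+1} = ω_m(t_{m+1}) where ω_m : [t_m, t_{m+1}] → ℍ_N is a differentiable curve with ω_m(t_m) = S^N(τ_m)(w_m + iλτ_m|w_m|²w_m) and ω_m′(t) = −i P^N(ω_m(t)·ν(t)) for some real-valued ν(t) ∈ L^∞((0,1);ℝ). If τ_m‖w_m‖⁶_{L⁶(0,1)} ≤ L₁‖w_m‖² for all m, then for every m with t_m ≤ T one has ‖w_m‖² ≤ e^{L₁T}‖w₀‖². -/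

import Mathlib

open MeasureTheory Complex Real Set
open scoped ENNReal

noncomputable section

/-- Lebesgue measure restricted to the interval `(0,1)`. -/
def μ01 : Measure ℝ := volume.restrict (Ioo (0:ℝ) 1)

/-- The `L^p((0,1);ℂ)` norm. -/
def lpnorm (p : ℝ≥0∞) (u : ℝ → ℂ) : ℝ := (eLpNorm u p μ01).toReal

/-- The pointwise cubic nonlinearity `|u|²u`. -/
def cubic (u : ℝ → ℂ) : ℝ → ℂ := fun x => ((‖u x‖ ^ 2 : ℝ) : ℂ) * u x

/-- The Dirichlet sine eigenfunctions `e_k(x) = √2 sin(kπx)`, as elements of `L²((0,1);ℂ)`. -/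
def eFun (k : ℕ) : ℝ → ℂ := fun x => ((Real.sqrt 2 * Real.sin (k * Real.pi * x) : ℝ) : ℂ)

/-- The `k`-th Fourier sine coefficient `∫₀¹ u e_k`. -/
def coeff (k : ℕ) (u : ℝ → ℂ) : ℂ := ∫ x in Ioo (0:ℝ) 1, u x * eFun k x

/-- The spectral Galerkin projection `P^N`. -/
def PN (N : ℕ) (u : ℝ → ℂ) : ℝ → ℂ :=
  fun x => ∑ k ∈ Finset.Icc 1 N, coeff k u * eFun k x

/-- The truncated Schrödinger group `S^N(t) = P^N e^{itΔ}`. -/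
def SN (N : ℕ) (t : ℝ) (u : ℝ → ℂ) : ℝ → ℂ :=
  fun x => ∑ k ∈ Finset.Icc 1 N,
    Complex.exp (-Complex.I * (((k:ℝ)^2 * Real.pi^2 * t : ℝ) : ℂ)) * coeff k u * eFun k x

/-- The space `ℍ_N`: the complex span of `e_1, …, e_N`. -/
def HN (N : ℕ) : Set (ℝ → ℂ) :=
  {u | ∃ c : ℕ → ℂ, u = fun x => ∑ k ∈ Finset.Icc 1 N, c k * eFun k x}

/-- The discrete Dirichlet Laplacian on `ℍ_N`, determined by `Δ_N e_k = −k²π² e_k`. -/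
def DeltaN (N : ℕ) (u : ℝ → ℂ) : ℝ → ℂ :=
  fun x => ∑ k ∈ Finset.Icc 1 N, (-(((k:ℝ)^2 * Real.pi^2 : ℝ) : ℂ)) * coeff k u * eFun k x

/-- The squared `ℍ¹` norm `‖u‖² + ‖u′‖²`. -/
def h1normSq (u : ℝ → ℂ) : ℝ := (lpnorm 2 u)^2 + (lpnorm 2 (deriv u))^2

/-- The Hamiltonian `ℋ(u) = ½‖u′‖² − (λ/4)‖u‖⁴_{L⁴}`. -/
def Ham (l : ℝ) (u : ℝ → ℂ) : ℝ :=
  (1/2) * (lpnorm 2 (deriv u))^2 - (l/4) * (lpnorm 4 u)^4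

/-- The functional `f(u) = ‖u″‖² + λ Re ∫₀¹ u″ conj(|u|²u)`. -/
def fFun (l : ℝ) (u : ℝ → ℂ) : ℝ :=
  (lpnorm 2 (deriv (deriv u)))^2
    + l * (∫ x in Ioo (0:ℝ) 1, deriv (deriv u) x * (starRingEnd ℂ) (cubic u x)).re

/-!
One step of the scheme does not increase the mass by more than a factor `1 + L₁ τ_m`.
The nonlinear substep `w ↦ w + iλτ|w|²w` adds exactly `τ²‖w‖⁶_{L⁶}` to `‖w‖²`, because
`⟪w, |w|²w⟫ = ∫ |w|⁴` is real; `S^N(τ)` multiplies the first `N` sine coefficients by unimodular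
factors and discards the others, so by Bessel it does not increase the mass; and the skeleton flow
conserves the mass: its velocity `−iP^N(ων)` lies in `ℍ_N`, so `ω` stays in `ℍ_N`, where
`⟪−iP^N(ων), ω⟫ = i⟪ων, ω⟫ = i∫ν|ω|²` is purely imaginary. The step restriction
`τ_m‖w_m‖⁶_{L⁶} ≤ L₁‖w_m‖²` and `1 + x ≤ eˣ` then give `‖w_m‖² ≤ e^{L₁ t_m}‖w₀‖²`.
-/

open ComplexConjugate

theorem map_eq_self_of_hasDerivWithinAt {E : Type*} [NormedAddCommGroup E] [NormedSpace ℝ E]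
    (P : E →L[ℝ] E) {F F' : ℝ → E} {a b : ℝ}
    (hF : ∀ s ∈ Icc a b, HasDerivWithinAt F (F' s) (Icc a b) s)
    (hPF' : ∀ s ∈ Icc a b, P (F' s) = F' s) (hPFa : P (F a) = F a) :
    ∀ s ∈ Icc a b, P (F s) = F s := by
  have hG : ∀ s ∈ Icc a b, HasDerivWithinAt (fun r => F r - P (F r)) 0 (Icc a b) s := by
    intro s hs
    have h := (hF s hs).sub (P.hasFDerivAt.comp_hasDerivWithinAt s (hF s hs))
    rwa [Function.comp_def, hPF' s hs, sub_self] at h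
  have hconst := constant_of_has_deriv_right_zero (fun s hs => (hG s hs).continuousWithinAt)
    fun s hs => (hG s (Ico_subset_Icc_self hs)).mono_of_mem_nhdsWithin (Icc_mem_nhdsGE_of_mem hs)
  intro s hs
  have h := hconst s hs
  rwa [hPFa, sub_self, sub_eq_zero, eq_comm] at h

theorem norm_eq_of_hasDerivWithinAt_of_re_inner_eq_zero {𝕜 E : Type*} [RCLike 𝕜]
    [NormedAddCommGroup E] [InnerProductSpace 𝕜 E] [NormedSpace ℝ E] {F F' : ℝ → E} {a b : ℝ}
    (hab : a ≤ b) (hF : ∀ s ∈ Icc a b, HasDerivWithinAt F (F' s) (Icc a b) s)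
    (horth : ∀ s ∈ Icc a b, RCLike.re (inner 𝕜 (F' s) (F s)) = 0) : ‖F b‖ = ‖F a‖ := by
  have hG : ∀ s ∈ Icc a b,
      HasDerivWithinAt (fun r => RCLike.re (inner 𝕜 (F r) (F r))) 0 (Icc a b) s := by
    intro s hs
    have h := (RCLike.reCLM.hasFDerivAt).comp_hasDerivWithinAt s ((hF s hs).inner 𝕜 (hF s hs))
    rwa [RCLike.reCLM_apply, map_add, ← inner_conj_symm (F s), RCLike.conj_re, horth s hs,
      add_zero] at h
  have hconst := constant_of_has_deriv_right_zero (fun s hs => (hG s hs).continuousWithinAt)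
    fun s hs => (hG s (Ico_subset_Icc_self hs)).mono_of_mem_nhdsWithin (Icc_mem_nhdsGE_of_mem hs)
  have hb := hconst b (right_mem_Icc.2 hab)
  simp only [← @norm_sq_eq_re_inner 𝕜] at hb
  exact (pow_left_inj₀ (norm_nonneg _) (norm_nonneg _) two_ne_zero).1 hb

theorem le_exp_mul_sum_mul_of_le_one_add_mul {a τ : ℕ → ℝ} {L : ℝ} (ha : ∀ m, 0 ≤ a m)
    (hstep : ∀ m, a (m + 1) ≤ (1 + L * τ m) * a m) (m : ℕ) :
    a m ≤ Real.exp (L * ∑ j ∈ Finset.range m, τ j) * a 0 := by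
  induction m with
  | zero => simp
  | succ m ih =>
    calc a (m + 1) ≤ (1 + L * τ m) * a m := hstep m
      _ ≤ Real.exp (L * τ m) * a m := by
          gcongr
          · exact ha m
          · linarith [Real.add_one_le_exp (L * τ m)]
      _ ≤ Real.exp (L * τ m) * (Real.exp (L * ∑ j ∈ Finset.range m, τ j) * a 0) := by gcongr
      _ = Real.exp (L * ∑ j ∈ Finset.range (m + 1), τ j) * a 0 := by
          rw [Finset.sum_range_succ, mul_add, Real.exp_add]; ring

theorem MeasureTheory.MemLp.toLp_finsetSum {α ι E : Type*} [MeasurableSpace α] {μ : Measure α}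
    {p : ℝ≥0∞} [Fact (1 ≤ p)] [NormedAddCommGroup E] (s : Finset ι) {f : ι → α → E}
    (hf : ∀ i, MemLp (f i) p μ) (hs : MemLp (∑ i ∈ s, f i) p μ) :
    hs.toLp _ = ∑ i ∈ s, (hf i).toLp (f i) := by
  classical
  induction s using Finset.induction_on with
  | empty => simp only [Finset.sum_empty]; exact MemLp.toLp_zero hs
  | insert a s ha ih =>
    simp only [Finset.sum_insert ha] at hs ⊢
    rw [MemLp.toLp_add (hf a) (memLp_finsetSum' s fun i _ => hf i), ih]

instance : IsFiniteMeasure μ01 := by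
  rw [μ01]
  exact isFiniteMeasure_restrict.2 (by simp)

local notation "L²" => Lp ℂ 2 μ01

theorem lpnorm_eq_norm_toLp {p : ℝ≥0∞} [Fact (1 ≤ p)] {f : ℝ → ℂ} (hf : MemLp f p μ01) :
    lpnorm p f = ‖hf.toLp f‖ :=
  (Lp.norm_toLp f hf).symm

theorem lpnorm_nonneg {p : ℝ≥0∞} {f : ℝ → ℂ} : 0 ≤ lpnorm p f := ENNReal.toReal_nonneg

theorem inner_toLp {f g : ℝ → ℂ} (hf : MemLp f 2 μ01) (hg : MemLp g 2 μ01) :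
    inner ℂ (hf.toLp f) (hg.toLp g) = ∫ x in Ioo (0:ℝ) 1, conj (f x) * g x := by
  rw [MeasureTheory.L2.inner_def]
  refine integral_congr_ae ?_
  filter_upwards [hf.coeFn_toLp, hg.coeFn_toLp] with x hfx hgx
  rw [hfx, hgx, RCLike.inner_apply']

theorem im_inner_toLp_ofReal_mul_eq_zero (ρ : ℝ → ℝ) {f : ℝ → ℂ} (hf : MemLp f 2 μ01)
    (hρf : MemLp (fun x => (ρ x : ℂ) * f x) 2 μ01) :
    (inner ℂ (hf.toLp f) (hρf.toLp _)).im = 0 := by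
  have hpt : ∀ x, conj (f x) * ((ρ x : ℂ) * f x) = ((ρ x * ‖f x‖ ^ 2 : ℝ) : ℂ) := by
    intro x
    rw [mul_left_comm, Complex.conj_mul']
    push_cast
    ring
  rw [inner_toLp]
  simp_rw [hpt]
  rw [integral_complex_ofReal, ofReal_im]

theorem continuous_eFun (k : ℕ) : Continuous (eFun k) := by
  unfold eFun
  fun_prop

theorem norm_eFun_le (k : ℕ) (x : ℝ) : ‖eFun k x‖ ≤ √2 := by
  rw [eFun, norm_real, norm_mul, Real.norm_of_nonneg (Real.sqrt_nonneg 2)]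
  exact mul_le_of_le_one_right (Real.sqrt_nonneg 2) (Real.abs_sin_le_one _)

theorem memLp_eFun (k : ℕ) (p : ℝ≥0∞) : MemLp (eFun k) p μ01 :=
  MemLp.of_bound (continuous_eFun k).aestronglyMeasurable _ (ae_of_all _ (norm_eFun_le k))

theorem integral_cos_int_mul_pi_mul (n : ℤ) :
    ∫ x in (0:ℝ)..1, Real.cos (n * π * x) = if n = 0 then 1 else 0 := by
  split_ifs with hn
  · simp [hn]
  · have hc : (n : ℝ) * π ≠ 0 := mul_ne_zero (Int.cast_ne_zero.2 hn) Real.pi_ne_zero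
    rw [intervalIntegral.integral_comp_mul_left (fun x => Real.cos x) hc]
    simp [integral_cos, Real.sin_int_mul_pi]

theorem integral_eFun_mul_eFun {k j : ℕ} (hk : 1 ≤ k) (hj : 1 ≤ j) :
    ∫ x in Ioo (0:ℝ) 1, eFun k x * eFun j x = if k = j then 1 else 0 := by
  have hprod : ∀ x, eFun k x * eFun j x =
      ((Real.cos (((k - j : ℤ) : ℝ) * π * x) - Real.cos (((k + j : ℤ) : ℝ) * π * x) : ℝ) : ℂ) := by
    intro x
    rw [eFun, eFun, ← ofReal_mul, Real.cos_sub_cos]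
    congr 1
    have hx1 : (((k - j : ℤ) : ℝ) * π * x + ((k + j : ℤ) : ℝ) * π * x) / 2 = k * π * x := by
      push_cast; ring
    have hx2 : (((k - j : ℤ) : ℝ) * π * x - ((k + j : ℤ) : ℝ) * π * x) / 2 = -(j * π * x) := by
      push_cast; ring
    rw [hx1, hx2, Real.sin_neg]
    linear_combination (Real.sin (k * π * x) * Real.sin (j * π * x))
      * Real.mul_self_sqrt (zero_le_two : (0:ℝ) ≤ 2)
  have hint : ∀ n : ℤ, IntervalIntegrable (fun x => Real.cos (n * π * x)) volume 0 1 :=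
    fun n => (by fun_prop : Continuous fun x => Real.cos (n * π * x)).intervalIntegrable _ _
  simp_rw [hprod]
  rw [integral_complex_ofReal, ← integral_Ioc_eq_integral_Ioo,
    ← intervalIntegral.integral_of_le zero_le_one, intervalIntegral.integral_sub (hint _) (hint _),
    integral_cos_int_mul_pi_mul, integral_cos_int_mul_pi_mul]
  split_ifs <;> (try norm_num) <;> omega

def sinePoly (N : ℕ) (c : ℕ → ℂ) : ℝ → ℂ := fun x => ∑ k ∈ Finset.Icc 1 N, c k * eFun k x

theorem memLp_sinePoly (N : ℕ) (c : ℕ → ℂ) (p : ℝ≥0∞) : MemLp (sinePoly N c) p μ01 := by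
  have hcont : Continuous (sinePoly N c) :=
    continuous_finsetSum _ fun k _ => continuous_const.mul (continuous_eFun k)
  refine MemLp.of_bound hcont.aestronglyMeasurable (∑ k ∈ Finset.Icc 1 N, ‖c k‖ * √2)
    (ae_of_all _ fun x => (norm_sum_le _ _).trans (Finset.sum_le_sum fun k _ => ?_))
  rw [norm_mul]
  exact mul_le_mul_of_nonneg_left (norm_eFun_le k x) (norm_nonneg _)

theorem memLp_of_mem_HN {N : ℕ} {u : ℝ → ℂ} (hu : u ∈ HN N) (p : ℝ≥0∞) : MemLp u p μ01 := by
  obtain ⟨c, rfl⟩ := hu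
  exact memLp_sinePoly N c p

theorem SN_mem_HN (N : ℕ) (τ : ℝ) (v : ℝ → ℂ) : SN N τ v ∈ HN N := ⟨_, rfl⟩

def eL2 (k : ℕ) : L² := (memLp_eFun k 2).toLp (eFun k)

theorem inner_eL2_eL2 {k j : ℕ} (hk : 1 ≤ k) (hj : 1 ≤ j) :
    inner ℂ (eL2 k) (eL2 j) = if k = j then 1 else 0 := by
  rw [eL2, eL2, inner_toLp, ← integral_eFun_mul_eFun hk hj]
  simp only [eFun, conj_ofReal]

theorem orthonormal_eL2 (N : ℕ) : Orthonormal ℂ (fun k : Finset.Icc 1 N => eL2 k) := by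
  rw [orthonormal_iff_ite]
  rintro ⟨k, hk⟩ ⟨j, hj⟩
  rw [inner_eL2_eL2 (Finset.mem_Icc.1 hk).1 (Finset.mem_Icc.1 hj).1]
  simp only [Subtype.mk.injEq]

theorem toLp_sinePoly (N : ℕ) (c : ℕ → ℂ) (h : MemLp (sinePoly N c) 2 μ01) :
    h.toLp _ = ∑ k ∈ Finset.Icc 1 N, c k • eL2 k := by
  have hsum : sinePoly N c = ∑ k ∈ Finset.Icc 1 N, c k • eFun k := by
    funext x
    simp [sinePoly, Finset.sum_apply]
  have hterm : ∀ k, MemLp (c k • eFun k) 2 μ01 := fun k => (memLp_eFun k 2).const_smul (c k)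
  rw [h.toLp_congr (memLp_finsetSum' _ fun k _ => hterm k) (Filter.EventuallyEq.of_eq hsum),
    MemLp.toLp_finsetSum _ hterm]
  exact Finset.sum_congr rfl fun k _ => MemLp.toLp_const_smul (c k) (memLp_eFun k 2)

theorem coeff_eq_inner_eL2 (k : ℕ) {f : ℝ → ℂ} (hf : MemLp f 2 μ01) :
    coeff k f = inner ℂ (eL2 k) (hf.toLp f) := by
  rw [eL2, inner_toLp, coeff]
  simp only [eFun, conj_ofReal, mul_comm]

theorem norm_sum_smul_eL2_sq (N : ℕ) (c : ℕ → ℂ) :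
    ‖∑ k ∈ Finset.Icc 1 N, c k • eL2 k‖ ^ 2 = ∑ k ∈ Finset.Icc 1 N, ‖c k‖ ^ 2 := by
  rw [← Finset.sum_coe_sort, @norm_sq_eq_re_inner ℂ, (orthonormal_eL2 N).inner_sum,
    ← Finset.sum_coe_sort _ fun k => ‖c k‖ ^ 2, map_sum]
  simp only [RCLike.conj_mul, ← RCLike.ofReal_pow, RCLike.ofReal_re]

theorem sum_norm_coeff_sq_le (N : ℕ) {f : ℝ → ℂ} (hf : MemLp f 2 μ01) :
    ∑ k ∈ Finset.Icc 1 N, ‖coeff k f‖ ^ 2 ≤ lpnorm 2 f ^ 2 := by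
  rw [lpnorm_eq_norm_toLp hf, ← Finset.sum_coe_sort]
  simp only [coeff_eq_inner_eL2 _ hf]
  exact (orthonormal_eL2 N).sum_inner_products_le _

theorem lpnorm_SN_le (N : ℕ) (τ : ℝ) {v : ℝ → ℂ} (hv : MemLp v 2 μ01) :
    lpnorm 2 (SN N τ v) ≤ lpnorm 2 v := by
  set c : ℕ → ℂ := fun k => Complex.exp (-I * (((k:ℝ)^2 * π^2 * τ : ℝ) : ℂ)) * coeff k v
  have hc : ∀ k, ‖c k‖ = ‖coeff k v‖ := fun k => by
    rw [norm_mul, show -I * (((k:ℝ)^2 * π^2 * τ : ℝ) : ℂ) = ((-((k:ℝ)^2 * π^2 * τ) : ℝ) : ℂ) * I by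
      push_cast; ring, norm_exp_ofReal_mul_I, one_mul]
  refine (pow_le_pow_iff_left₀ lpnorm_nonneg lpnorm_nonneg two_ne_zero).1 ?_
  calc lpnorm 2 (SN N τ v) ^ 2 = ∑ k ∈ Finset.Icc 1 N, ‖coeff k v‖ ^ 2 := by
        rw [show SN N τ v = sinePoly N c from rfl, lpnorm_eq_norm_toLp (memLp_sinePoly N c 2),
          toLp_sinePoly, norm_sum_smul_eL2_sq]
        simp only [hc]
    _ ≤ lpnorm 2 v ^ 2 := sum_norm_coeff_sq_le N hv

theorem norm_cubic (u : ℝ → ℂ) (x : ℝ) : ‖cubic u x‖ = ‖u x‖ ^ 3 := by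
  rw [cubic, norm_mul, norm_real, Real.norm_of_nonneg (by positivity)]
  ring

theorem eLpNorm_cubic {μ : Measure ℝ} (u : ℝ → ℂ) : eLpNorm (cubic u) 2 μ = eLpNorm u 6 μ ^ 3 := by
  have hnorm : ∀ x, ‖cubic u x‖ = ‖‖u x‖ ^ (3:ℝ)‖ := fun x => by
    rw [norm_cubic, Real.norm_of_nonneg (by positivity)]
    norm_cast
  rw [eLpNorm_congr_norm_ae (ae_of_all _ hnorm), eLpNorm_norm_rpow _ (by norm_num : (0:ℝ) < 3),
    ← ENNReal.rpow_natCast]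
  norm_num

theorem MeasureTheory.MemLp.cubic {μ : Measure ℝ} {u : ℝ → ℂ} (hu : MemLp u 6 μ) :
    MemLp (cubic u) 2 μ := by
  refine ⟨?_, by rw [eLpNorm_cubic]; exact ENNReal.pow_lt_top hu.2⟩
  have hm := hu.aestronglyMeasurable
  exact (Complex.continuous_ofReal.comp_aestronglyMeasurable (hm.norm.pow 2)).mul hm

theorem lpnorm_cubic (u : ℝ → ℂ) : lpnorm 2 (cubic u) = lpnorm 6 u ^ 3 := by
  rw [lpnorm, lpnorm, eLpNorm_cubic, ENNReal.toReal_pow]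

theorem lpnorm_add_smul_cubic_sq {u : ℝ → ℂ} (hu : MemLp u 6 μ01) {z : ℂ} (hz : z.re = 0) :
    lpnorm 2 (fun x => u x + z * cubic u x) ^ 2 = lpnorm 2 u ^ 2 + ‖z‖ ^ 2 * lpnorm 6 u ^ 6 := by
  have hu2 : MemLp u 2 μ01 := hu.mono_exponent (by norm_num)
  have hc := hu.cubic
  have him : (inner ℂ (hu2.toLp u) (hc.toLp (cubic u))).im = 0 :=
    im_inner_toLp_ofReal_mul_eq_zero (fun x => ‖u x‖ ^ 2) hu2 hc
  rw [show (fun x => u x + z * cubic u x) = u + z • cubic u from rfl,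
    lpnorm_eq_norm_toLp (hu2.add (hc.const_smul z)), MemLp.toLp_add hu2 (hc.const_smul z),
    MemLp.toLp_const_smul z hc, @norm_add_sq ℂ, inner_smul_right, norm_smul,
    ← lpnorm_eq_norm_toLp hu2, ← lpnorm_eq_norm_toLp hc, lpnorm_cubic]
  simp only [RCLike.re_to_complex, mul_re, hz, him]
  ring

theorem lpnorm_SN_add_smul_cubic_sq_le (N : ℕ) (τ : ℝ) {u : ℝ → ℂ} (hu : MemLp u 6 μ01) {z : ℂ}
    (hz : z.re = 0) :
    lpnorm 2 (SN N τ fun x => u x + z * cubic u x) ^ 2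
      ≤ lpnorm 2 u ^ 2 + ‖z‖ ^ 2 * lpnorm 6 u ^ 6 := by
  rw [← lpnorm_add_smul_cubic_sq hu hz]
  gcongr
  · exact lpnorm_nonneg
  · exact lpnorm_SN_le N τ ((hu.mono_exponent (by norm_num)).add (hu.cubic.const_mul z))

def projHN (N : ℕ) : L² →L[ℂ] L² :=
  ∑ k ∈ Finset.Icc 1 N, InnerProductSpace.rankOne ℂ (eL2 k) (eL2 k)

theorem projHN_apply (N : ℕ) (y : L²) :
    projHN N y = ∑ k ∈ Finset.Icc 1 N, inner ℂ (eL2 k) y • eL2 k := by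
  simp only [projHN, _root_.sum_apply, InnerProductSpace.rankOne_apply]

theorem projHN_sum_smul_eL2 (N : ℕ) (c : ℕ → ℂ) :
    projHN N (∑ k ∈ Finset.Icc 1 N, c k • eL2 k) = ∑ k ∈ Finset.Icc 1 N, c k • eL2 k := by
  rw [projHN_apply]
  refine Finset.sum_congr rfl fun k hk => ?_
  rw [← Finset.sum_coe_sort (Finset.Icc 1 N) fun j => c j • eL2 j,
    (orthonormal_eL2 N).inner_right_fintype (fun j => c j) ⟨k, hk⟩]

theorem projHN_projHN (N : ℕ) (y : L²) : projHN N (projHN N y) = projHN N y := by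
  rw [projHN_apply N y, projHN_sum_smul_eL2]

theorem inner_projHN_left (N : ℕ) (y x : L²) :
    inner ℂ (projHN N y) x = inner ℂ y (projHN N x) := by
  simp only [projHN_apply, sum_inner, inner_sum, inner_smul_left, inner_smul_right,
    inner_conj_symm, mul_comm]

theorem toLp_neg_I_mul_PN (N : ℕ) {g : ℝ → ℂ} (hg : MemLp g 2 μ01)
    (h : MemLp (fun x => -I * PN N g x) 2 μ01) :
    h.toLp _ = -I • projHN N (hg.toLp g) := by
  have hfun : (fun x => -I * PN N g x) = sinePoly N fun k => -I * coeff k g := by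
    funext x
    simp only [PN, sinePoly, Finset.mul_sum, mul_assoc]
  rw [h.toLp_congr (memLp_sinePoly N _ 2) (Filter.EventuallyEq.of_eq hfun), toLp_sinePoly,
    projHN_apply, Finset.smul_sum]
  simp only [smul_smul, coeff_eq_inner_eL2 _ hg]

theorem lpnorm_eq_of_skeleton {N : ℕ} {a b : ℝ} (hab : a ≤ b) {ω : ℝ → ℝ → ℂ}
    {ν : ℝ → ℝ → ℝ} (hν : ∀ s, MemLp (ν s) ∞ μ01) (hωL : ∀ s, MemLp (ω s) 2 μ01)
    (hDL : ∀ s, MemLp (fun x => -I * PN N (fun z => ω s z * ((ν s z : ℝ) : ℂ)) x) 2 μ01)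
    (hderiv : ∀ s ∈ Icc a b, HasDerivWithinAt (fun r => (hωL r).toLp (ω r))
      ((hDL s).toLp (fun x => -I * PN N (fun z => ω s z * ((ν s z : ℝ) : ℂ)) x)) (Icc a b) s)
    (hinit : ω a ∈ HN N) : lpnorm 2 (ω b) = lpnorm 2 (ω a) := by
  have hνω : ∀ s, MemLp (fun z => (ν s z : ℂ) * ω s z) 2 μ01 :=
    fun s => (hωL s).mul' (hν s).ofReal
  have hων : ∀ s, MemLp (fun z => ω s z * (ν s z : ℂ)) 2 μ01 := fun s => by
    simpa only [mul_comm] using hνω s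
  have hvel : ∀ s, (hDL s).toLp _ = -I • projHN N ((hνω s).toLp _) := fun s => by
    rw [toLp_neg_I_mul_PN N (hων s), (hων s).toLp_congr (hνω s)
      (Filter.EventuallyEq.of_eq (funext fun z => mul_comm _ _))]
  have hinit' : projHN N ((hωL a).toLp (ω a)) = (hωL a).toLp (ω a) := by
    obtain ⟨c, hc⟩ := hinit
    rw [(hωL a).toLp_congr (memLp_sinePoly N c 2) (Filter.EventuallyEq.of_eq hc), toLp_sinePoly,
      projHN_sum_smul_eL2]
  have hfix : ∀ s ∈ Icc a b, projHN N ((hωL s).toLp (ω s)) = (hωL s).toLp (ω s) :=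
    map_eq_self_of_hasDerivWithinAt ((projHN N).restrictScalars ℝ) hderiv (fun s _ => by
      simp only [hvel, ContinuousLinearMap.coe_restrictScalars', map_smul, projHN_projHN]) hinit'
  rw [lpnorm_eq_norm_toLp (hωL b), lpnorm_eq_norm_toLp (hωL a)]
  refine norm_eq_of_hasDerivWithinAt_of_re_inner_eq_zero (𝕜 := ℂ) hab hderiv fun s hs => ?_
  have him : (inner ℂ ((hνω s).toLp _) ((hωL s).toLp (ω s))).im = 0 := by
    rw [← inner_conj_symm, conj_im, im_inner_toLp_ofReal_mul_eq_zero (ν s) (hωL s) (hνω s),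
      neg_zero]
  rw [hvel, inner_smul_left, inner_projHN_left, hfix s hs]
  simp [him]

theorem stmt13_general (l : ℝ) (hl : l = 1 ∨ l = -1) (L₁ T : ℝ) (hL₁ : 0 < L₁)
    (N : ℕ) (w₀ : ℝ → ℂ)
    (τ : ℕ → ℝ) (hτ : ∀ m, 0 < τ m)
    (t : ℕ → ℝ) (ht : ∀ m, t m = ∑ j ∈ Finset.range m, τ j)
    (w : ℕ → ℝ → ℂ) (hw0 : w 0 = w₀) (hwHN : ∀ m, w m ∈ HN N)
    (ν : ℝ → ℝ → ℝ) (hν : ∀ s, MemLp (ν s) ∞ μ01)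
    (ω : ℕ → ℝ → ℝ → ℂ)
    (hωL : ∀ m s, MemLp (ω m s) 2 μ01)
    (hDL : ∀ m s, MemLp
      (fun x => -Complex.I * PN N (fun z => ω m s z * ((ν s z : ℝ) : ℂ)) x) 2 μ01)
    (hω_init : ∀ m, ω m (t m)
      = SN N (τ m) (fun x => w m x + Complex.I * l * τ m * cubic (w m) x))
    (hω_deriv : ∀ m, ∀ s ∈ Set.Icc (t m) (t (m+1)),
      HasDerivWithinAt (fun r => (hωL m r).toLp (ω m r))
        ((hDL m s).toLp (fun x => -Complex.I * PN N (fun z => ω m s z * ((ν s z : ℝ) : ℂ)) x))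
        (Set.Icc (t m) (t (m+1))) s)
    (hω_end : ∀ m, w (m+1) = ω m (t (m+1)))
    (hstep : ∀ m, τ m * (lpnorm 6 (w m))^6 ≤ L₁ * (lpnorm 2 (w m))^2) :
    ∀ m, t m ≤ T → (lpnorm 2 (w m))^2 ≤ Real.exp (L₁ * T) * (lpnorm 2 w₀)^2 := by
  have hmass : ∀ m, lpnorm 2 (w (m + 1)) ^ 2 ≤ (1 + L₁ * τ m) * lpnorm 2 (w m) ^ 2 := by
    intro m
    have htm : t m ≤ t (m + 1) := by
      rw [ht, ht, Finset.sum_range_succ]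
      linarith [hτ m]
    have hz : ‖I * l * τ m‖ ^ 2 = τ m ^ 2 := by
      rcases hl with rfl | rfl <;> simp [sq_abs]
    calc lpnorm 2 (w (m + 1)) ^ 2 = lpnorm 2 (ω m (t m)) ^ 2 := by
          rw [hω_end, lpnorm_eq_of_skeleton htm hν (hωL m) (hDL m) (hω_deriv m)
            (hω_init m ▸ SN_mem_HN _ _ _)]
      _ ≤ lpnorm 2 (w m) ^ 2 + τ m ^ 2 * lpnorm 6 (w m) ^ 6 := by
          rw [hω_init, ← hz]
          exact lpnorm_SN_add_smul_cubic_sq_le N (τ m) (memLp_of_mem_HN (hwHN m) 6) (by simp)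
      _ ≤ (1 + L₁ * τ m) * lpnorm 2 (w m) ^ 2 := by
          nlinarith [mul_le_mul_of_nonneg_left (hstep m) (hτ m).le]
  intro m hm
  calc lpnorm 2 (w m) ^ 2 ≤ Real.exp (L₁ * t m) * lpnorm 2 w₀ ^ 2 := by
        rw [ht, ← hw0]
        exact le_exp_mul_sum_mul_of_le_one_add_mul (a := fun m => lpnorm 2 (w m) ^ 2)
          (fun _ => sq_nonneg _) hmass m
    _ ≤ Real.exp (L₁ * T) * lpnorm 2 w₀ ^ 2 := by gcongr

/-- mass bound for the iterates of the skeleton equation (Proposition 4.2). -/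
theorem stmt13 (l : ℝ) (hl : l = 1 ∨ l = -1) (L₁ T : ℝ) (hL₁ : 0 < L₁) (hT : 0 < T)
    (N : ℕ) (hN : 1 ≤ N) (w₀ : ℝ → ℂ) (hw₀ : w₀ ∈ HN N)
    (τ : ℕ → ℝ) (hτ : ∀ m, 0 < τ m)
    (t : ℕ → ℝ) (ht : ∀ m, t m = ∑ j ∈ Finset.range m, τ j)
    (w : ℕ → ℝ → ℂ) (hw0 : w 0 = w₀) (hwHN : ∀ m, w m ∈ HN N)
    (ν : ℝ → ℝ → ℝ) (hν : ∀ s, MemLp (ν s) ∞ μ01)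
    (ω : ℕ → ℝ → ℝ → ℂ)
    (hωL : ∀ m s, MemLp (ω m s) 2 μ01)
    (hDL : ∀ m s, MemLp
      (fun x => -Complex.I * PN N (fun z => ω m s z * ((ν s z : ℝ) : ℂ)) x) 2 μ01)
    (hω_init : ∀ m, ω m (t m)
      = SN N (τ m) (fun x => w m x + Complex.I * l * τ m * cubic (w m) x))
    (hω_deriv : ∀ m, ∀ s ∈ Set.Icc (t m) (t (m+1)),
      HasDerivWithinAt (fun r => (hωL m r).toLp (ω m r))
        ((hDL m s).toLp (fun x => -Complex.I * PN N (fun z => ω m s z * ((ν s z : ℝ) : ℂ)) x))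
        (Set.Icc (t m) (t (m+1))) s)
    (hω_end : ∀ m, w (m+1) = ω m (t (m+1)))
    (hstep : ∀ m, τ m * (lpnorm 6 (w m))^6 ≤ L₁ * (lpnorm 2 (w m))^2) :
    ∀ m, t m ≤ T → (lpnorm 2 (w m))^2 ≤ Real.exp (L₁ * T) * (lpnorm 2 w₀)^2 :=
  stmt13_general l hl L₁ T hL₁ N w₀ τ hτ t ht w hw0 hwHN ν hν ω hωL hDL hω_init hω_deriv hω_end
    hstep
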